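/- For all real x ≥ 0, one has √(x + 1/4) < Γ(x+1)/Γ(x+1/2) ≤ √(x + 1/π) < √(x + 1/2). -/

import Mathlib

/-!
Write `W x = Γ(x + 1) / Γ(x + 1/2)`, so that `W (x + 1) = W x · (x + 1) / (x + 1/2)`, and
log-convexity of `Γ` gives `x ≤ W x ^ 2 ≤ x + 1/2`.

Lower bound: `W x ^ 2 / (x + 1/4)` strictly decreases under `x ↦ x + 1`, because
`(x + 1)² (x + 1/4) < (x + 1/2)² (x + 5/4)`, and it tends to `1`; hence it exceeds `1`.

Upper bound for `x ≥ 1/12`: with `c = 20/63 < 1/π`, the quantity `(x + c) / W x ^ 2` does not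
increase under `x ↦ x + 3` (a polynomial inequality) and tends to `1`; hence it is at least `1`.

Upper bound for `x ≤ 1/12`: the duplication formula gives
`W x = 4 ^ x Γ(x + 1)² / (√π Γ(2x + 1))`, and log-convexity gives `Γ(x + 1)² ≤ Γ(2x + 1)`,
so `W x ^ 2 ≤ 16 ^ x / π ≤ x + 1/π` by Bernoulli's inequality.
-/

open Real Filter Topology

noncomputable def gammaHalfRatio (x : ℝ) : ℝ := Gamma (x + 1) / Gamma (x + 1 / 2)

lemma gammaHalfRatio_pos {x : ℝ} (hx : -1 / 2 < x) : 0 < gammaHalfRatio x :=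
  div_pos (Gamma_pos_of_pos (by linarith)) (Gamma_pos_of_pos (by linarith))

lemma gammaHalfRatio_add_one {x : ℝ} (h₁ : x + 1 ≠ 0) (h₂ : x + 1 / 2 ≠ 0) :
    gammaHalfRatio (x + 1) = gammaHalfRatio x * ((x + 1) / (x + 1 / 2)) := by
  rw [gammaHalfRatio, gammaHalfRatio, Gamma_add_one h₁, add_right_comm, Gamma_add_one h₂,
    mul_div_mul_comm, mul_comm]

lemma gammaHalfRatio_add_three {x : ℝ} (hx : -1 / 2 < x) :
    gammaHalfRatio (x + 3) = gammaHalfRatio x *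
      ((x + 1) * (x + 2) * (x + 3) / ((x + 1 / 2) * (x + 3 / 2) * (x + 5 / 2))) := by
  rw [show x + 3 = x + 1 + 1 + 1 by ring, gammaHalfRatio_add_one (by linarith) (by linarith),
    gammaHalfRatio_add_one (by linarith) (by linarith),
    gammaHalfRatio_add_one (by linarith) (by linarith)]
  field_simp
  ring

lemma Gamma_add_div_two_sq_le {a b : ℝ} (ha : 0 < a) (hb : 0 < b) :
    Gamma ((a + b) / 2) ^ 2 ≤ Gamma a * Gamma b := by
  have h := Gamma_mul_add_mul_le_rpow_Gamma_mul_rpow_Gamma ha hb one_half_pos one_half_pos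
    (add_halves 1)
  rw [← sqrt_eq_rpow, ← sqrt_eq_rpow, ← sqrt_mul (Gamma_pos_of_pos ha).le,
    show 1 / 2 * a + 1 / 2 * b = (a + b) / 2 by ring] at h
  calc Gamma ((a + b) / 2) ^ 2 ≤ √(Gamma a * Gamma b) ^ 2 :=
        pow_le_pow_left₀ (Gamma_pos_of_pos (by positivity)).le h 2
    _ = Gamma a * Gamma b :=
        sq_sqrt (mul_pos (Gamma_pos_of_pos ha) (Gamma_pos_of_pos hb)).le

lemma le_gammaHalfRatio_sq {x : ℝ} (hx : 0 < x) : x ≤ gammaHalfRatio x ^ 2 := by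
  have h := Gamma_add_div_two_sq_le hx (by linarith : 0 < x + 1)
  rw [show (x + (x + 1)) / 2 = x + 1 / 2 by ring] at h
  have hΓ : 0 < Gamma (x + 1 / 2) := Gamma_pos_of_pos (by linarith)
  rw [gammaHalfRatio, div_pow, le_div_iff₀ (by positivity)]
  calc x * Gamma (x + 1 / 2) ^ 2 ≤ x * (Gamma x * Gamma (x + 1)) := by gcongr
    _ = Gamma (x + 1) ^ 2 := by rw [Gamma_add_one hx.ne']; ring

lemma gammaHalfRatio_sq_le_add_half {x : ℝ} (hx : -1 / 2 < x) :
    gammaHalfRatio x ^ 2 ≤ x + 1 / 2 := by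
  have h := Gamma_add_div_two_sq_le (by linarith : 0 < x + 1 / 2) (by linarith : 0 < x + 3 / 2)
  rw [show (x + 1 / 2 + (x + 3 / 2)) / 2 = x + 1 by ring,
    show x + 3 / 2 = x + 1 / 2 + 1 by ring, Gamma_add_one (s := x + 1 / 2) (by linarith)] at h
  have hΓ : 0 < Gamma (x + 1 / 2) := Gamma_pos_of_pos (by linarith)
  rw [gammaHalfRatio, div_pow, div_le_iff₀ (by positivity)]
  linarith [h]

lemma gammaHalfRatio_le_two_rpow {x : ℝ} (hx : -1 / 2 < x) :
    gammaHalfRatio x ≤ 2 ^ (2 * x) / √π := by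
  have hdup := Gamma_mul_Gamma_add_half (x + 1 / 2)
  rw [show x + 1 / 2 + 1 / 2 = x + 1 by ring, show 2 * (x + 1 / 2) = 1 + 2 * x by ring,
    show 1 - (1 + 2 * x) = -(2 * x) by ring, rpow_neg zero_le_two] at hdup
  have hconv := Gamma_add_div_two_sq_le one_pos (by linarith : 0 < 1 + 2 * x)
  rw [show (1 + (1 + 2 * x)) / 2 = x + 1 by ring, Gamma_one, one_mul] at hconv
  have h₁ : 0 < Gamma (x + 1) := Gamma_pos_of_pos (by linarith)
  have h₂ : 0 < Gamma (x + 1 / 2) := Gamma_pos_of_pos (by linarith)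
  have h₄ : 0 < √π := by positivity
  rw [gammaHalfRatio, div_le_div_iff₀ h₂ h₄]
  refine le_of_mul_le_mul_left ?_ h₁
  calc Gamma (x + 1) * (Gamma (x + 1) * √π) = Gamma (x + 1) ^ 2 * √π := by ring
    _ ≤ Gamma (1 + 2 * x) * √π := by gcongr
    _ = 2 ^ (2 * x) * (Gamma (x + 1 / 2) * Gamma (x + 1)) := by rw [hdup]; field_simp
    _ = Gamma (x + 1) * (2 ^ (2 * x) * Gamma (x + 1 / 2)) := by ring

lemma two_rpow_four_mul_le {x : ℝ} (hx₀ : 0 ≤ x) (hx : x ≤ 1 / 12) :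
    (2 : ℝ) ^ (4 * x) ≤ 1 + π * x := by
  set r : ℝ := 2 ^ (1 / 3 : ℝ)
  have hr₀ : 0 ≤ r := by positivity
  have hr_cube : r ^ 3 = 2 := by
    rw [← rpow_natCast, ← rpow_mul zero_le_two]
    norm_num
  have hr : r ≤ 1 + π / 12 := by
    have hπ : (1 + 3.14 / 12 : ℝ) ≤ 1 + π / 12 := by linarith [pi_gt_d2]
    rw [← pow_le_pow_iff_left₀ hr₀ (by positivity) three_ne_zero, hr_cube]
    calc (2 : ℝ) ≤ (1 + 3.14 / 12) ^ 3 := by norm_num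
      _ ≤ (1 + π / 12) ^ 3 := by gcongr
  calc (2 : ℝ) ^ (4 * x) = (1 + (r - 1)) ^ (12 * x) := by
        rw [add_sub_cancel, ← rpow_mul zero_le_two]
        ring_nf
    _ ≤ 1 + 12 * x * (r - 1) :=
        rpow_one_add_le_one_add_mul_self (by linarith) (by positivity) (by linarith)
    _ ≤ 1 + π * x := by nlinarith

lemma gammaHalfRatio_sq_le_add_one_div_pi {x : ℝ} (hx₀ : 0 ≤ x) (hx : x ≤ 1 / 12) :
    gammaHalfRatio x ^ 2 ≤ x + 1 / π := by
  calc gammaHalfRatio x ^ 2 ≤ (2 ^ (2 * x) / √π) ^ 2 :=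
        pow_le_pow_left₀ (gammaHalfRatio_pos (by linarith)).le
          (gammaHalfRatio_le_two_rpow (by linarith)) 2
    _ = 2 ^ (4 * x) / π := by
        rw [div_pow, sq_sqrt pi_pos.le, ← rpow_mul_natCast zero_le_two]
        ring_nf
    _ ≤ (1 + π * x) / π := by gcongr; exact two_rpow_four_mul_le hx₀ hx
    _ = x + 1 / π := by field_simp; ring

lemma le_of_step_antitone_of_tendsto {f g : ℝ → ℝ} {x p L : ℝ} (hp : 0 < p)
    (hstep : ∀ y, x ≤ y → f (y + p) ≤ f y) (hgf : ∀ y, x ≤ y → g y ≤ f y)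
    (hg : Tendsto g atTop (𝓝 L)) : L ≤ f x := by
  have hle : ∀ n : ℕ, x ≤ x + n * p := fun n => le_add_of_nonneg_right (by positivity)
  have hf : ∀ n : ℕ, f (x + n * p) ≤ f x := by
    intro n
    induction n with
    | zero => simp
    | succ n ih =>
      calc f (x + (n + 1 : ℕ) * p) = f (x + n * p + p) := by push_cast; ring_nf
        _ ≤ f x := (hstep _ (hle n)).trans ih
  have hlim : Tendsto (fun n : ℕ => g (x + n * p)) atTop (𝓝 L) :=
    hg.comp (tendsto_atTop_add_const_left _ x
      (tendsto_natCast_atTop_atTop.atTop_mul_const hp))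
  exact le_of_tendsto' hlim fun n => (hgf _ (hle n)).trans (hf n)

lemma tendsto_add_div_add_atTop_nhds_one (a b : ℝ) :
    Tendsto (fun y : ℝ => (y + a) / (y + b)) atTop (𝓝 1) := by
  have hden : Tendsto (fun y : ℝ => y + b) atTop atTop :=
    tendsto_atTop_add_const_right _ b tendsto_id
  have h : Tendsto (fun y : ℝ => 1 + (a - b) / (y + b)) atTop (𝓝 (1 + 0)) :=
    tendsto_const_nhds.add (tendsto_const_nhds.div_atTop hden)
  rw [add_zero] at h
  refine h.congr' ?_
  filter_upwards [hden.eventually_gt_atTop 0] with y hy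
  field_simp
  ring

lemma gammaHalfRatio_sq_div_add_one_lt {y : ℝ} (hy : -1 / 4 < y) :
    gammaHalfRatio (y + 1) ^ 2 / (y + 1 + 1 / 4) < gammaHalfRatio y ^ 2 / (y + 1 / 4) := by
  have hW : 0 < gammaHalfRatio y ^ 2 := pow_pos (gammaHalfRatio_pos (by linarith)) 2
  have hy₀ : 0 < y + 1 / 4 := by linarith
  -- `(y + 1/2)² (y + 5/4) = (y + 1)² (y + 1/4) + 1/16`
  have key : (y + 1) ^ 2 / ((y + 1 / 2) ^ 2 * (y + 1 + 1 / 4)) < 1 / (y + 1 / 4) := by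
    rw [div_lt_div_iff₀ (mul_pos (pow_pos (by linarith) 2) (by linarith)) hy₀]
    nlinarith
  rw [gammaHalfRatio_add_one (by linarith) (by linarith), mul_pow, div_pow]
  calc gammaHalfRatio y ^ 2 * ((y + 1) ^ 2 / (y + 1 / 2) ^ 2) / (y + 1 + 1 / 4)
      = gammaHalfRatio y ^ 2 * ((y + 1) ^ 2 / ((y + 1 / 2) ^ 2 * (y + 1 + 1 / 4))) := by
        rw [mul_div_assoc, div_div]
    _ < gammaHalfRatio y ^ 2 * (1 / (y + 1 / 4)) := mul_lt_mul_of_pos_left key hW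
    _ = gammaHalfRatio y ^ 2 / (y + 1 / 4) := mul_one_div _ _

lemma add_quarter_lt_gammaHalfRatio_sq {x : ℝ} (hx : -1 / 4 < x) :
    x + 1 / 4 < gammaHalfRatio x ^ 2 := by
  have hlim : 1 ≤ gammaHalfRatio (x + 1) ^ 2 / (x + 1 + 1 / 4) :=
    le_of_step_antitone_of_tendsto (f := fun y => gammaHalfRatio y ^ 2 / (y + 1 / 4))
      (g := fun y => y / (y + 1 / 4)) one_pos
      (fun y hy => (gammaHalfRatio_sq_div_add_one_lt (by linarith)).le)
      (fun y hy => div_le_div_of_nonneg_right (le_gammaHalfRatio_sq (by linarith)) (by linarith))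
      (by simpa using tendsto_add_div_add_atTop_nhds_one 0 (1 / 4))
  have hstep := hlim.trans_lt (gammaHalfRatio_sq_div_add_one_lt hx)
  rwa [one_lt_div (by linarith)] at hstep

/- `20/63 = 1/3.15 < 1/π`. A single step `y ↦ y + 1` would only work for `y ≳ 0.17`, beyond the
range `x ≤ 1/12` where the bound near zero applies; three steps work from `1/12` on. -/
lemma add_three_mul_sq_le_mul_sq {y : ℝ} (hy : 1 / 12 ≤ y) :
    (y + 3 + 20 / 63) * ((y + 1 / 2) * (y + 3 / 2) * (y + 5 / 2)) ^ 2 ≤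
      (y + 20 / 63) * ((y + 1) * (y + 2) * (y + 3)) ^ 2 := by
  obtain ⟨t, ht, rfl⟩ : ∃ t, 0 ≤ t ∧ y = t + 1 / 12 := ⟨y - 1 / 12, by linarith, by ring⟩
  linarith [pow_nonneg ht 2, pow_nonneg ht 3, pow_nonneg ht 4, pow_nonneg ht 5]

lemma div_gammaHalfRatio_sq_add_three_le {y : ℝ} (hy : 1 / 12 ≤ y) :
    (y + 3 + 20 / 63) / gammaHalfRatio (y + 3) ^ 2 ≤ (y + 20 / 63) / gammaHalfRatio y ^ 2 := by
  have hW : 0 < gammaHalfRatio y ^ 2 := pow_pos (gammaHalfRatio_pos (by linarith)) 2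
  have hA : 0 < (y + 1 / 2) * (y + 3 / 2) * (y + 5 / 2) := by
    have : 0 < y := by linarith
    positivity
  have hB : 0 < (y + 1) * (y + 2) * (y + 3) := by
    have : 0 < y := by linarith
    positivity
  rw [gammaHalfRatio_add_three (by linarith), mul_pow, div_pow]
  calc (y + 3 + 20 / 63) / (gammaHalfRatio y ^ 2 * (((y + 1) * (y + 2) * (y + 3)) ^ 2 /
        ((y + 1 / 2) * (y + 3 / 2) * (y + 5 / 2)) ^ 2))
      = (y + 3 + 20 / 63) * ((y + 1 / 2) * (y + 3 / 2) * (y + 5 / 2)) ^ 2 /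
          ((y + 1) * (y + 2) * (y + 3)) ^ 2 / gammaHalfRatio y ^ 2 := by
        field_simp
    _ ≤ (y + 20 / 63) * ((y + 1) * (y + 2) * (y + 3)) ^ 2 /
          ((y + 1) * (y + 2) * (y + 3)) ^ 2 / gammaHalfRatio y ^ 2 :=
        div_le_div_of_nonneg_right
          (div_le_div_of_nonneg_right (add_three_mul_sq_le_mul_sq hy) (by positivity)) hW.le
    _ = (y + 20 / 63) / gammaHalfRatio y ^ 2 := by
        rw [mul_div_cancel_right₀ _ (by positivity)]

lemma gammaHalfRatio_sq_le_add_twenty_div_sixtyThree {x : ℝ} (hx : 1 / 12 ≤ x) :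
    gammaHalfRatio x ^ 2 ≤ x + 20 / 63 := by
  have hlim : 1 ≤ (x + 20 / 63) / gammaHalfRatio x ^ 2 :=
    le_of_step_antitone_of_tendsto (f := fun y => (y + 20 / 63) / gammaHalfRatio y ^ 2)
      (g := fun y => (y + 20 / 63) / (y + 1 / 2)) three_pos
      (fun y hy => div_gammaHalfRatio_sq_add_three_le (hx.trans hy))
      (fun y hy => div_le_div_of_nonneg_left (by linarith)
        (pow_pos (gammaHalfRatio_pos (by linarith)) 2)
        (gammaHalfRatio_sq_le_add_half (by linarith)))
      (tendsto_add_div_add_atTop_nhds_one _ _)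
  rwa [one_le_div (pow_pos (gammaHalfRatio_pos (by linarith)) 2)] at hlim

theorem watson_inequality (x : ℝ) (hx : 0 ≤ x) :
    Real.sqrt (x + 1 / 4) < Real.Gamma (x + 1) / Real.Gamma (x + 1 / 2) ∧
    Real.Gamma (x + 1) / Real.Gamma (x + 1 / 2) ≤ Real.sqrt (x + 1 / Real.pi) ∧
    Real.sqrt (x + 1 / Real.pi) < Real.sqrt (x + 1 / 2) := by
  have hW : 0 < gammaHalfRatio x := gammaHalfRatio_pos (by linarith)
  have hupper : gammaHalfRatio x ^ 2 ≤ x + 1 / π := by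
    rcases le_total x (1 / 12) with hsmall | hlarge
    · exact gammaHalfRatio_sq_le_add_one_div_pi hx hsmall
    · have hπ : (20 / 63 : ℝ) ≤ 1 / π := by
        rw [show (20 / 63 : ℝ) = 1 / 3.15 by norm_num]
        exact one_div_le_one_div_of_le pi_pos pi_lt_d2.le
      linarith [gammaHalfRatio_sq_le_add_twenty_div_sixtyThree hlarge]
  have hπ : 1 / π < 1 / 2 := one_div_lt_one_div_of_lt two_pos (by linarith [pi_gt_three])
  exact ⟨(sqrt_lt' hW).2 (add_quarter_lt_gammaHalfRatio_sq (by linarith)),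
    (le_sqrt hW.le (by positivity)).2 hupper, sqrt_lt_sqrt (by positivity) (by linarith)⟩
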